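/- Let δ ≥ 0, p ≥ 0, γ > 0, Ste > 0 and let λ_γ solve F(β_γ(λ_γ)) = (√π/Ste)·λ_γ·exp(λ_γ²)·erf(λ_γ). Define y_γ(η) = F⁻¹(G_γ(η)) with G_γ(η) = (√π/Ste)·λ_γ·exp(λ_γ²)·(erf(λ_γ) − erf(η)). Then y_γ(0) = β_γ(λ_γ) = 1 − (2λ_γ·exp(λ_γ²))/(γ·Ste), and 0 ≤ y_γ(η) ≤ y_γ(0) < 1 for all η ∈ [0, λ_γ]. -/

import Mathlib

open Real

noncomputable def erf (x : ℝ) : ℝ := (2 / Real.sqrt π) * ∫ t in (0:ℝ)..x, Real.exp (-t^2)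

/-! Since `erf` is increasing with `erf 0 = 0`, the argument `G_γ(η)` of `F⁻¹` lies
between `0` and `G_γ(0) = F(β_γ(λ_γ))`. As `F` is strictly increasing on `[0, ∞)`,
applying `F⁻¹` preserves these bounds, and `F⁻¹(F(β)) = β` gives `y_γ(0) = β_γ(λ_γ)`,
which is `< 1` because `λ_γ > 0`. -/

open Set

theorem erf_zero : erf 0 = 0 := by simp [erf]

theorem erf_sub_erf (a b : ℝ) : erf b - erf a = 2 / √π * ∫ t in a..b, exp (-t ^ 2) := by
  have hint (x y : ℝ) : IntervalIntegrable (fun t => exp (-t ^ 2)) MeasureTheory.volume x y :=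
    (by fun_prop : Continuous fun t : ℝ => exp (-t ^ 2)).intervalIntegrable x y
  rw [erf, erf, ← mul_sub, intervalIntegral.integral_interval_sub_left (hint 0 b) (hint 0 a)]

theorem erf_monotone : Monotone erf := fun a b hab => by
  rw [← sub_nonneg, erf_sub_erf]
  exact mul_nonneg (by positivity) (intervalIntegral.integral_nonneg hab fun t _ => (exp_pos _).le)

theorem erf_nonneg {x : ℝ} (hx : 0 ≤ x) : 0 ≤ erf x := erf_zero ▸ erf_monotone hx

theorem strictMonoOn_add_mul_rpow {c q : ℝ} (hc : 0 ≤ c) (hq : 0 ≤ q) :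
    StrictMonoOn (fun x : ℝ => x + c * x ^ q) (Ici 0) := fun x hx y _ hxy => by
  have := mul_le_mul_of_nonneg_left (rpow_le_rpow hx hxy.le hq) hc
  simp only
  linarith

/-- y_γ(0) = β_γ(λ_γ) = 1 - 2λ_γ exp(λ_γ²)/(γ Ste), and 0 ≤ y_γ(η) ≤ y_γ(0) < 1 on [0, λ_γ]. -/
theorem y_gamma_bounds (δ p γ Ste lγ : ℝ) (hδ : 0 ≤ δ) (hp : 0 ≤ p)
    (hγ : 0 < γ) (hSte : 0 < Ste) (hlγ : 0 < lγ)
    (hβ : 0 ≤ 1 - (2 * lγ * Real.exp (lγ^2)) / (γ * Ste))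
    (heq : (1 - (2 * lγ * Real.exp (lγ^2)) / (γ * Ste)) +
        (δ / (p + 1)) * (1 - (2 * lγ * Real.exp (lγ^2)) / (γ * Ste)) ^ (p + 1) =
      (Real.sqrt π / Ste) * (lγ * Real.exp (lγ^2) * erf lγ))
    (Finv : ℝ → ℝ)
    (hFinvMaps : ∀ x ≥ (0:ℝ), 0 ≤ Finv x)
    (hFinvLeft : ∀ x ≥ (0:ℝ), Finv (x + (δ / (p + 1)) * x ^ (p + 1)) = x)
    (hFinvRight : ∀ x ≥ (0:ℝ), Finv x + (δ / (p + 1)) * (Finv x) ^ (p + 1) = x)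
    (yγ : ℝ → ℝ)
    (hyγ : yγ = fun η =>
      Finv ((Real.sqrt π / Ste) * lγ * Real.exp (lγ^2) * (erf lγ - erf η))) :
    yγ 0 = 1 - (2 * lγ * Real.exp (lγ^2)) / (γ * Ste) ∧
    (∀ η ∈ Set.Icc 0 lγ, 0 ≤ yγ η ∧ yγ η ≤ yγ 0) ∧
    yγ 0 < 1 := by
  set β := 1 - (2 * lγ * exp (lγ ^ 2)) / (γ * Ste)
  set C := √π / Ste * lγ * exp (lγ ^ 2)
  have hC : 0 ≤ C := by positivity
  have hFβ : C * erf lγ = β + δ / (p + 1) * β ^ (p + 1) := by rw [heq]; ring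
  have hF :=
    strictMonoOn_add_mul_rpow (c := δ / (p + 1)) (by positivity) (by linarith : 0 ≤ p + 1)
  have hy0 : yγ 0 = β := by
    rw [hyγ]
    simp only [erf_zero, sub_zero]
    rw [hFβ, hFinvLeft β hβ]
  have hβlt : β < 1 := by
    have : 0 < 2 * lγ * exp (lγ ^ 2) / (γ * Ste) := by positivity
    linarith
  refine ⟨hy0, fun η ⟨hη0, hηl⟩ => ?_, hy0 ▸ hβlt⟩
  have hG : 0 ≤ C * (erf lγ - erf η) := mul_nonneg hC (sub_nonneg.2 (erf_monotone hηl))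
  have hGle : C * (erf lγ - erf η) ≤ β + δ / (p + 1) * β ^ (p + 1) :=
    hFβ ▸ mul_le_mul_of_nonneg_left (sub_le_self _ (erf_nonneg hη0)) hC
  rw [hy0, hyγ]
  refine ⟨hFinvMaps _ hG, (hF.le_iff_le (hFinvMaps _ hG) hβ).1 ?_⟩
  simp only [hFinvRight _ hG, hGle]
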